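/- arXiv:2211.15366 — 2 statements merged into one kernel-verified Lean document; each statement's English description precedes it below -/
import Mathlib

section
/- Let G be a connected simple graph on n ≥ 3 vertices, and let G⁺ be the graph on n + 1 vertices obtained from G by adding one new vertex adjacent to at least one vertex of G. Then 1 − n ≤ λ_2(G⁺) − λ_2(G) ≤ 1. -/
open Matrix

/-- The eigenvalues of the Laplacian matrix of a finite simple graph,
listed in nondecreasing order. -/
noncomputable def sortedLapEigs {V : Type*} [Fintype V] [DecidableEq V]
    (G : SimpleGraph V) [DecidableRel G.Adj] : Fin (Fintype.card V) → ℝ :=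
  let f : Fin (Fintype.card V) → ℝ :=
    (SimpleGraph.posSemidef_lapMatrix (R := ℝ) G).isHermitian.eigenvalues ∘
      (Fintype.equivFin V).symm
  f ∘ Tuple.sort f

/-- The algebraic connectivity of a finite simple graph: the second-smallest
eigenvalue of its Laplacian matrix (junk value `0` if the graph has fewer than
two vertices). -/
noncomputable def algConn {V : Type*} [Fintype V] [DecidableEq V]
    (G : SimpleGraph V) [DecidableRel G.Adj] : ℝ :=
  if h : 1 < Fintype.card V then sortedLapEigs G ⟨1, h⟩ else 0

/-- The graph on `n + 1` vertices obtained from a graph `G` on `n` vertices by adding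
one new vertex whose neighbourhood in `G` is `s`. -/
def addVertex {n : ℕ} (G : SimpleGraph (Fin n)) (s : Finset (Fin n)) :
    SimpleGraph (Option (Fin n)) where
  Adj x y :=
    match x, y with
    | some u, some w => G.Adj u w
    | some u, none => u ∈ s
    | none, some w => w ∈ s
    | none, none => False
  symm := ⟨by
    rintro (u | u) (w | w) h <;> simp_all
    exact h.symm⟩
  loopless := ⟨by
    rintro (u | u) h <;> simp_all⟩

instance {n : ℕ} (G : SimpleGraph (Fin n)) [DecidableRel G.Adj] (s : Finset (Fin n)) :
    DecidableRel (addVertex G s).Adj := fun x y =>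
  match x, y with
  | some u, some w => inferInstanceAs (Decidable (G.Adj u w))
  | some u, none => inferInstanceAs (Decidable (u ∈ s))
  | none, some w => inferInstanceAs (Decidable (w ∈ s))
  | none, none => inferInstanceAs (Decidable False)

/-!
Both bounds come from the Rayleigh characterisation of `λ₂` on a connected graph:
`λ₂ ‖x‖² ≤ xᵀ L x` for every `x ⊥ 𝟙`, with equality for an eigenvector of `λ₂` (which is `⊥ 𝟙`).

Extending an eigenvector `y` of `λ₂(G)` by `0` at the new vertex adds `∑_{w ∈ s} y_w² ≤ ‖y‖²`
to its energy, so `λ₂(G⁺) ≤ λ₂(G) + 1`.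

The test vector `e_u - e_v` gives `2 λ₂(G) ≤ deg u + deg v + 2 [u ~ v]`, hence `λ₂(G) ≤ n`, and
`λ₂(G) ≤ n - 1` when `G` is not complete, where `λ₂(G⁺) ≥ 0` suffices. If `G` is complete, a
neighbour `u` of the new vertex is adjacent to every other vertex of `G⁺`; then for `x ⊥ 𝟙`,
`xᵀ L x ≥ ∑_w (x_u - x_w)² = (n + 1) x_u² + ‖x‖² ≥ ‖x‖²`, so `λ₂(G⁺) ≥ 1`.
-/

open Finset

theorem OrthonormalBasis.sum_dotProduct_mul_dotProduct {ι : Type*} [Fintype ι]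
    (b : OrthonormalBasis ι ℝ (EuclideanSpace ℝ ι)) (x y : ι → ℝ) :
    ∑ i, (⇑(b i) ⬝ᵥ x) * (⇑(b i) ⬝ᵥ y) = x ⬝ᵥ y := by
  have := b.sum_inner_mul_inner (WithLp.toLp 2 x) (WithLp.toLp 2 y)
  simp only [EuclideanSpace.inner_eq_star_dotProduct, star_trivial] at this
  rw [dotProduct_comm x y, ← this]
  simp only [dotProduct_comm y]

namespace Matrix.IsHermitian

variable {ι : Type*} [Fintype ι] [DecidableEq ι] {A : Matrix ι ι ℝ}

theorem dotProduct_eigenvectorBasis_mulVec (hA : A.IsHermitian) (i : ι) (x : ι → ℝ) :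
    ⇑(hA.eigenvectorBasis i) ⬝ᵥ (A *ᵥ x) = hA.eigenvalues i * (⇑(hA.eigenvectorBasis i) ⬝ᵥ x) := by
  rw [dotProduct_mulVec, ← mulVec_transpose, ← conjTranspose_eq_transpose_of_trivial, hA.eq,
    hA.mulVec_eigenvectorBasis, smul_dotProduct, smul_eq_mul]

theorem dotProduct_mulVec_eq_sum (hA : A.IsHermitian) (x : ι → ℝ) :
    x ⬝ᵥ (A *ᵥ x) = ∑ i, hA.eigenvalues i * (⇑(hA.eigenvectorBasis i) ⬝ᵥ x) ^ 2 := by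
  rw [← hA.eigenvectorBasis.sum_dotProduct_mul_dotProduct]
  refine sum_congr rfl fun i _ => ?_
  rw [hA.dotProduct_eigenvectorBasis_mulVec]
  ring

end Matrix.IsHermitian

namespace SimpleGraph

variable {V : Type*} [Fintype V] {G : SimpleGraph V} [DecidableRel G.Adj]

theorem cast_degree_le_card_sub_one (v : V) : (G.degree v : ℝ) ≤ Fintype.card V - 1 := by
  rw [le_sub_iff_add_le]
  exact_mod_cast G.degree_lt_card_verts v

variable [DecidableEq V]
variable (G)

noncomputable def sortedLapEigsEquiv : Fin (Fintype.card V) ≃ V :=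
  (Tuple.sort ((G.isHermitian_lapMatrix ℝ).eigenvalues ∘ (Fintype.equivFin V).symm)).trans
    (Fintype.equivFin V).symm

theorem sortedLapEigs_eq (j : Fin (Fintype.card V)) :
    sortedLapEigs G j = (G.isHermitian_lapMatrix ℝ).eigenvalues (G.sortedLapEigsEquiv j) :=
  rfl

theorem sortedLapEigs_monotone : Monotone (sortedLapEigs G) :=
  Tuple.monotone_sort _

theorem exists_lapMatrix_eigenvalues_eq_zero [Nonempty V] :
    ∃ i, (G.isHermitian_lapMatrix ℝ).eigenvalues i = 0 := by
  have h := det_lapMatrix_eq_zero G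
  rw [(G.isHermitian_lapMatrix ℝ).det_eq_prod_eigenvalues, prod_eq_zero_iff] at h
  obtain ⟨i, -, hi⟩ := h
  exact ⟨i, by exact_mod_cast hi⟩

theorem sortedLapEigs_zero (h : 0 < Fintype.card V) : sortedLapEigs G ⟨0, h⟩ = 0 := by
  have : Nonempty V := Fintype.card_pos_iff.mp h
  obtain ⟨i, hi⟩ := G.exists_lapMatrix_eigenvalues_eq_zero
  refine le_antisymm ?_ ((posSemidef_lapMatrix ℝ G).eigenvalues_nonneg _)
  calc sortedLapEigs G ⟨0, h⟩ ≤ sortedLapEigs G (G.sortedLapEigsEquiv.symm i) :=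
        G.sortedLapEigs_monotone (Fin.zero_le _)
    _ = 0 := by rw [sortedLapEigs_eq, Equiv.apply_symm_apply, hi]

theorem algConn_le_lapMatrix_eigenvalues (h : 1 < Fintype.card V) {i : V}
    (hi : (G.isHermitian_lapMatrix ℝ).eigenvalues i ≠ 0) :
    algConn G ≤ (G.isHermitian_lapMatrix ℝ).eigenvalues i := by
  obtain ⟨j, rfl⟩ := G.sortedLapEigsEquiv.surjective i
  rw [← sortedLapEigs_eq] at hi ⊢
  have hj : (j : ℕ) ≠ 0 := fun h0 => hi (by
    rw [show j = ⟨0, by omega⟩ from Fin.ext h0, G.sortedLapEigs_zero])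
  rw [algConn, dif_pos h]
  exact G.sortedLapEigs_monotone (Fin.mk_le_of_le_val (by omega))

theorem algConn_nonneg : 0 ≤ algConn G := by
  unfold algConn
  split_ifs
  · exact (posSemidef_lapMatrix ℝ G).eigenvalues_nonneg _
  · rfl

theorem dotProduct_lapMatrix_mulVec (x : V → ℝ) :
    x ⬝ᵥ (G.lapMatrix ℝ *ᵥ x) = (∑ i, ∑ j, if G.Adj i j then (x i - x j) ^ 2 else 0) / 2 := by
  rw [← toLinearMap₂'_apply', lapMatrix_toLinearMap₂']

theorem sum_adj_sq_le_dotProduct_lapMatrix_mulVec (x : V → ℝ) (u : V) :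
    ∑ j, (if G.Adj u j then (x u - x j) ^ 2 else 0) ≤ x ⬝ᵥ (G.lapMatrix ℝ *ᵥ x) := by
  set f : V → V → ℝ := fun i j => if G.Adj i j then (x i - x j) ^ 2 else 0
  have hf : ∀ i j, 0 ≤ f i j := fun i j => by positivity
  have hsymm : ∀ i, f i u = f u i := fun i => by simp only [f, G.adj_comm i u]; ring_nf
  have hdiag : f u u = 0 := if_neg (G.loopless.irrefl u)
  suffices 2 * ∑ j, f u j ≤ ∑ i, ∑ j, f i j by
    rw [dotProduct_lapMatrix_mulVec]; linarith
  calc 2 * ∑ j, f u j = ∑ j, f u j + ∑ i ∈ univ.erase u, f i u := by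
        rw [sum_erase univ (f := fun i => f i u) hdiag, two_mul]
        simp only [hsymm]
    _ ≤ ∑ j, f u j + ∑ i ∈ univ.erase u, ∑ j, f i j := by
        gcongr with i
        exact single_le_sum (fun j _ => hf i j) (mem_univ u)
    _ = ∑ i, ∑ j, f i j := add_sum_erase _ (fun i => ∑ j, f i j) (mem_univ u)

theorem dotProduct_self_le_of_forall_adj {u : V} (hu : ∀ w, w ≠ u → G.Adj u w) {x : V → ℝ}
    (hx : ∑ v, x v = 0) : x ⬝ᵥ x ≤ x ⬝ᵥ (G.lapMatrix ℝ *ᵥ x) := by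
  have hstar : ∑ j, (if G.Adj u j then (x u - x j) ^ 2 else 0) = ∑ j, (x u - x j) ^ 2 := by
    refine sum_congr rfl fun j _ => ?_
    by_cases hj : j = u
    · simp [hj]
    · rw [if_pos (hu j hj)]
  have hexpand : ∑ j, (x u - x j) ^ 2 = Fintype.card V * x u ^ 2 + x ⬝ᵥ x := by
    simp only [sub_sq, sum_add_distrib, sum_sub_distrib, ← mul_sum, hx]
    simp [dotProduct, sq]
  calc x ⬝ᵥ x ≤ Fintype.card V * x u ^ 2 + x ⬝ᵥ x := by nlinarith
    _ = _ := by rw [← hexpand, ← hstar]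
    _ ≤ _ := G.sum_adj_sq_le_dotProduct_lapMatrix_mulVec x u

theorem dotProduct_lapMatrix_mulVec_single_sub_single {u v : V} (huv : u ≠ v) :
    (Pi.single u 1 - Pi.single v 1 : V → ℝ) ⬝ᵥ
        (G.lapMatrix ℝ *ᵥ (Pi.single u 1 - Pi.single v 1)) =
      G.degree u + G.degree v + if G.Adj u v then 2 else 0 := by
  simp [mulVec_sub, dotProduct_sub, sub_dotProduct, lapMatrix, degMatrix, adjMatrix_apply, huv,
    huv.symm, G.adj_comm v u]
  split_ifs <;> ring

variable {G}

theorem Connected.lapMatrix_eigenvectorBasis_eq (hconn : G.Connected) {i : V}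
    (hi : (G.isHermitian_lapMatrix ℝ).eigenvalues i = 0) (v w : V) :
    (G.isHermitian_lapMatrix ℝ).eigenvectorBasis i v =
      (G.isHermitian_lapMatrix ℝ).eigenvectorBasis i w := by
  have hker : G.lapMatrix ℝ *ᵥ ⇑((G.isHermitian_lapMatrix ℝ).eigenvectorBasis i) = 0 := by
    rw [(G.isHermitian_lapMatrix ℝ).mulVec_eigenvectorBasis, hi, zero_smul]
  exact (lapMatrix_mulVec_eq_zero_iff_forall_reachable G).mp hker v w (hconn.preconnected v w)

theorem Connected.lapMatrix_eigenvectorBasis_dotProduct_eq_zero (hconn : G.Connected) {i : V}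
    (hi : (G.isHermitian_lapMatrix ℝ).eigenvalues i = 0) {x : V → ℝ} (hx : ∑ v, x v = 0) :
    ⇑((G.isHermitian_lapMatrix ℝ).eigenvectorBasis i) ⬝ᵥ x = 0 := by
  obtain ⟨v₀⟩ := hconn.nonempty
  simp only [dotProduct, hconn.lapMatrix_eigenvectorBasis_eq hi _ v₀, ← mul_sum, hx, mul_zero]

theorem Connected.algConn_mul_dotProduct_self_le (hconn : G.Connected) {x : V → ℝ}
    (hx : ∑ v, x v = 0) : algConn G * (x ⬝ᵥ x) ≤ x ⬝ᵥ (G.lapMatrix ℝ *ᵥ x) := by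
  by_cases h : 1 < Fintype.card V
  · rw [(G.isHermitian_lapMatrix ℝ).dotProduct_mulVec_eq_sum,
      ← (G.isHermitian_lapMatrix ℝ).eigenvectorBasis.sum_dotProduct_mul_dotProduct, mul_sum]
    refine sum_le_sum fun i _ => ?_
    by_cases hi : (G.isHermitian_lapMatrix ℝ).eigenvalues i = 0
    · simp [hconn.lapMatrix_eigenvectorBasis_dotProduct_eq_zero hi hx]
    · rw [← sq]
      exact mul_le_mul_of_nonneg_right (G.algConn_le_lapMatrix_eigenvalues h hi) (sq_nonneg _)
  · rw [algConn, dif_neg h, zero_mul]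
    exact (posSemidef_lapMatrix ℝ G).dotProduct_mulVec_nonneg x

theorem Connected.exists_lapMatrix_mulVec_eq_algConn_smul (hconn : G.Connected)
    (h : 1 < Fintype.card V) :
    ∃ y : V → ℝ, y ≠ 0 ∧ ∑ v, y v = 0 ∧ G.lapMatrix ℝ *ᵥ y = algConn G • y := by
  set b := (G.isHermitian_lapMatrix ℝ).eigenvectorBasis
  set π := G.sortedLapEigsEquiv
  have hb : ∀ i, ⇑(b i) ≠ 0 := fun i h0 =>
    b.orthonormal.ne_zero i (by ext v; exact congrFun h0 v)
  -- `b (π 0)` belongs to the eigenvalue `0`, so it is constant; `b (π 1)` is orthogonal to it.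
  obtain ⟨v₀⟩ := hconn.nonempty
  have hconst : ∀ v, b (π ⟨0, by omega⟩) v = b (π ⟨0, by omega⟩) v₀ :=
    fun v => hconn.lapMatrix_eigenvectorBasis_eq (G.sortedLapEigs_zero _) v v₀
  have horth : ⇑(b (π ⟨1, h⟩)) ⬝ᵥ ⇑(b (π ⟨0, by omega⟩)) = 0 :=
    b.orthonormal.2 (π.injective.ne (by simp))
  refine ⟨b (π ⟨1, h⟩), hb _, ?_, ?_⟩
  · have hc : b (π ⟨0, by omega⟩) v₀ ≠ 0 := fun hc =>
      hb _ (funext fun v => by rw [hconst v, hc]; rfl)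
    simp only [dotProduct, hconst, ← sum_mul] at horth
    exact (mul_eq_zero.mp horth).resolve_right hc
  · rw [(G.isHermitian_lapMatrix ℝ).mulVec_eigenvectorBasis, algConn, dif_pos h, sortedLapEigs_eq]

theorem Connected.le_algConn_of_forall (hconn : G.Connected) (h : 1 < Fintype.card V) {c : ℝ}
    (hc : ∀ x : V → ℝ, ∑ v, x v = 0 → c * (x ⬝ᵥ x) ≤ x ⬝ᵥ (G.lapMatrix ℝ *ᵥ x)) :
    c ≤ algConn G := by
  obtain ⟨y, hy, hsum, heig⟩ := hconn.exists_lapMatrix_mulVec_eq_algConn_smul h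
  refine le_of_mul_le_mul_right ?_ (dotProduct_self_star_pos_iff.mpr hy)
  simpa [heig] using hc y hsum

theorem Connected.two_mul_algConn_le (hconn : G.Connected) {u v : V} (huv : u ≠ v) :
    2 * algConn G ≤ G.degree u + G.degree v + if G.Adj u v then 2 else 0 := by
  have hsum : ∑ w, (Pi.single u 1 - Pi.single v 1 : V → ℝ) w = 0 := by simp
  have hnorm : (Pi.single u 1 - Pi.single v 1 : V → ℝ) ⬝ᵥ (Pi.single u 1 - Pi.single v 1) = 2 := by
    simp [dotProduct_sub, huv, huv.symm]
    norm_num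
  have := hconn.algConn_mul_dotProduct_self_le hsum
  rwa [hnorm, G.dotProduct_lapMatrix_mulVec_single_sub_single huv, mul_comm] at this

theorem Connected.algConn_le_card (hconn : G.Connected) : algConn G ≤ Fintype.card V := by
  by_cases h : 1 < Fintype.card V
  · obtain ⟨u, v, huv⟩ := Fintype.exists_pair_of_one_lt_card h
    have := hconn.two_mul_algConn_le huv
    have := G.cast_degree_le_card_sub_one u
    have := G.cast_degree_le_card_sub_one v
    split_ifs at * <;> linarith
  · rw [algConn, dif_neg h]
    positivity

theorem Connected.algConn_le_card_sub_one (hconn : G.Connected) {u v : V} (huv : u ≠ v)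
    (hadj : ¬G.Adj u v) : algConn G ≤ Fintype.card V - 1 := by
  have := hconn.two_mul_algConn_le huv
  rw [if_neg hadj] at this
  linarith [G.cast_degree_le_card_sub_one u, G.cast_degree_le_card_sub_one v]

theorem one_le_algConn_of_forall_adj (h : 1 < Fintype.card V) {u : V}
    (hu : ∀ w, w ≠ u → G.Adj u w) : 1 ≤ algConn G := by
  have hconn : G.Connected := by
    have hreach : ∀ w, G.Reachable w u := fun w =>
      if hw : w = u then hw ▸ .refl w else (hu w hw).symm.reachable
    have : Nonempty V := ⟨u⟩
    exact ⟨fun v w => (hreach v).trans (hreach w).symm⟩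
  refine hconn.le_algConn_of_forall h fun x hx => ?_
  rw [one_mul]
  exact G.dotProduct_self_le_of_forall_adj hu hx

end SimpleGraph

open SimpleGraph

section AddVertex

variable {n : ℕ} {G : SimpleGraph (Fin n)} {s : Finset (Fin n)}

theorem addVertex_connected (hconn : G.Connected) (hs : s.Nonempty) :
    (addVertex G s).Connected := by
  obtain ⟨u₀, hu₀⟩ := hs
  have hreach : ∀ z, (addVertex G s).Reachable z (some u₀) := by
    rintro (_ | v)
    · exact Adj.reachable (show (addVertex G s).Adj none (some u₀) from hu₀)
    · obtain ⟨w⟩ := hconn.preconnected v u₀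
      exact (w.map ⟨some, fun h => h⟩).reachable
  exact ⟨fun x y => (hreach x).trans (hreach y).symm⟩

variable [DecidableRel G.Adj]

theorem dotProduct_lapMatrix_addVertex_mulVec (z : Option (Fin n) → ℝ) :
    z ⬝ᵥ ((addVertex G s).lapMatrix ℝ *ᵥ z) =
      (z ∘ some) ⬝ᵥ (G.lapMatrix ℝ *ᵥ (z ∘ some)) + ∑ w ∈ s, (z (some w) - z none) ^ 2 := by
  -- restate the `if`s with the standard `Decidable` instances, so that `sum_ite_mem` applies
  have hsn : ∀ i (c : ℝ), (if (addVertex G s).Adj (some i) none then c else 0) =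
      if i ∈ s then c else 0 := fun _ _ => rfl
  have hns : ∀ i (c : ℝ), (if (addVertex G s).Adj none (some i) then c else 0) =
      if i ∈ s then c else 0 := fun _ _ => rfl
  have hss : ∀ i j (c : ℝ), (if (addVertex G s).Adj (some i) (some j) then c else 0) =
      if G.Adj i j then c else 0 := fun _ _ _ => rfl
  simp only [dotProduct_lapMatrix_mulVec, Fintype.sum_option, sum_add_distrib, hsn, hns, hss,
    SimpleGraph.irrefl, if_false, zero_add, sum_ite_mem, univ_inter, Function.comp_apply,
    sub_sq_comm (z none)]
  ring

theorem algConn_addVertex_le (hconn : G.Connected) (hs : s.Nonempty) (hn : 1 < n) :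
    algConn (addVertex G s) ≤ algConn G + 1 := by
  obtain ⟨y, hy, hsum, heig⟩ :=
    hconn.exists_lapMatrix_mulVec_eq_algConn_smul (by rwa [Fintype.card_fin])
  set z : Option (Fin n) → ℝ := fun o => o.elim 0 y
  have hzsum : ∑ o, z o = 0 := by simp [z, Fintype.sum_option, hsum]
  have hzz : z ⬝ᵥ z = y ⬝ᵥ y := by simp [z, dotProduct, Fintype.sum_option]
  have hs_le : ∑ w ∈ s, y w ^ 2 ≤ y ⬝ᵥ y := by
    simp only [dotProduct, ← sq]
    exact sum_le_sum_of_subset_of_nonneg (subset_univ s) fun w _ _ => sq_nonneg _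
  refine le_of_mul_le_mul_right ?_ (dotProduct_self_star_pos_iff.mpr hy)
  calc algConn (addVertex G s) * (y ⬝ᵥ y) = algConn (addVertex G s) * (z ⬝ᵥ z) := by rw [hzz]
    _ ≤ z ⬝ᵥ ((addVertex G s).lapMatrix ℝ *ᵥ z) :=
      (addVertex_connected hconn hs).algConn_mul_dotProduct_self_le hzsum
    _ = algConn G * (y ⬝ᵥ y) + ∑ w ∈ s, y w ^ 2 := by
      rw [dotProduct_lapMatrix_addVertex_mulVec, show z ∘ some = y from rfl, heig, dotProduct_smul,
        smul_eq_mul]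
      simp [z]
    _ ≤ (algConn G + 1) * (y ⬝ᵥ y) := by linarith

theorem algConn_le_algConn_addVertex_add (hconn : G.Connected) (hs : s.Nonempty) :
    algConn G ≤ algConn (addVertex G s) + (n - 1) := by
  by_cases hcomplete : ∀ u v, u ≠ v → G.Adj u v
  · obtain ⟨u, hu⟩ := hs
    have hdom : ∀ w, w ≠ some u → (addVertex G s).Adj (some u) w := by
      rintro (_ | w) hw
      · exact hu
      · exact hcomplete u w fun h => hw (h ▸ rfl)
    have hG' := one_le_algConn_of_forall_adj (by simp [u.pos]) hdom
    have hG := hconn.algConn_le_card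
    rw [Fintype.card_fin] at hG
    linarith
  · push Not at hcomplete
    obtain ⟨u, v, huv, hadj⟩ := hcomplete
    have hG := hconn.algConn_le_card_sub_one huv hadj
    rw [Fintype.card_fin] at hG
    linarith [algConn_nonneg (addVertex G s)]

end AddVertex

/-- If `G` is a connected simple graph on `n ≥ 3` vertices and `G⁺` is obtained from `G`
by adding one new vertex adjacent to at least one vertex of `G`, then
`1 − n ≤ λ₂(G⁺) − λ₂(G) ≤ 1`. -/
theorem lambda2_add_vertex_bounds (n : ℕ) (hn : 3 ≤ n) (G : SimpleGraph (Fin n))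
    [DecidableRel G.Adj] (hconn : G.Connected)
    (s : Finset (Fin n)) (hs : s.Nonempty) :
    1 - (n : ℝ) ≤ algConn (addVertex G s) - algConn G ∧
      algConn (addVertex G s) - algConn G ≤ 1 := by
  have hupper := algConn_addVertex_le hconn hs (by omega)
  have hlower := algConn_le_algConn_addVertex_add hconn hs
  constructor <;> linarith
end

section
/- Let ε > 0, δ ∈ (0, 1), and n ∈ ℕ with n ≥ 3. Suppose b > 0 satisfies ε − log ΔC(b) − log(1 − δ) > 0 and b ≥ (n − 1) / (ε − log ΔC(b) − log(1 − δ)), where ΔC(b) = (2 − e^{−(n−1)/b} − e^{−1/b}) / (1 − e^{−n/b}). Then for all λ, λ' ∈ [0, n] with |λ − λ'| ≤ n − 1 and for every Borel set S ⊆ ℝ, μ_{λ,b}(S) ≤ e^ε · μ_{λ',b}(S) + δ. -/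
open MeasureTheory

/-- The normalizing constant of the bounded Laplace mechanism on `[0, n]`. -/
noncomputable def Cnorm (n : ℕ) (lam b : ℝ) : ℝ :=
  ∫ x in (0 : ℝ)..(n : ℝ), (1 / (2 * b)) * Real.exp (-|x - lam| / b)

/-- The bounded Laplace distribution on `[0, n]` with location `lam` and scale `b`:
the probability measure on `ℝ` with density
`x ↦ (1/(2b·C(lam,b))) e^{−|x−lam|/b}` on `[0, n]` and `0` elsewhere. -/
noncomputable def boundedLaplace (n : ℕ) (lam b : ℝ) : Measure ℝ :=
  volume.withDensity fun x =>
    if x ∈ Set.Icc (0 : ℝ) (n : ℝ) then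
      ENNReal.ofReal ((1 / (2 * b * Cnorm n lam b)) * Real.exp (-|x - lam| / b))
    else 0

/-!
On `[0, n]` the normalizer has the closed form `C(t) = 1 - (e^{-t/b} + e^{-(n-t)/b}) / 2`, a
concave, hence log-concave, function symmetric under `t ↦ n - t`. Log-concavity gives
`C(λ') C(0) ≤ C(λ) C(|λ - λ'|)`, and `t ↦ C(t) e^{t/b}` is increasing, so together with the
triangle inequality in the exponent the density of `μ_{λ,b}` is at most
`K = ΔC(b) e^{(n-1)/b}` times that of `μ_{λ',b}`. The condition on `b` says exactly that
`K (1 - δ) ≤ e^ε`, and then `μ_{λ,b}(S) ≤ (1 - δ) K μ_{λ',b}(S) + δ`.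
-/

open Real Set

theorem convexOn_exp_mul_add (a c : ℝ) : ConvexOn ℝ univ fun t => exp (a * t + c) := by
  refine ⟨convex_univ, fun x _ y _ p q hp hq hpq => ?_⟩
  have h := convexOn_exp.2 (mem_univ (a * x + c)) (mem_univ (a * y + c)) hp hq hpq
  simp only [smul_eq_mul] at h ⊢
  convert h using 2
  linear_combination -c * hpq

theorem ConcaveOn.log {E : Type*} [AddCommMonoid E] [Module ℝ E] {s : Set E} {f : E → ℝ}
    (hf : ConcaveOn ℝ s f) (hpos : ∀ x ∈ s, 0 < f x) :
    ConcaveOn ℝ s fun x => log (f x) := by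
  refine ⟨hf.1, fun x hx y hy a b ha hb hab => ?_⟩
  have hcomb : 0 < a • f x + b • f y := (convex_Ioi (0 : ℝ)) (hpos x hx) (hpos y hy) ha hb hab
  exact (strictConcaveOn_log_Ioi.concaveOn.2 (hpos x hx) (hpos y hy) ha hb hab).trans
    (log_le_log hcomb (hf.2 hx hy ha hb hab))

theorem ConcaveOn.add_le_add_of_add_eq {s : Set ℝ} {f : ℝ → ℝ} (hf : ConcaveOn ℝ s f)
    {p q r t : ℝ} (hp : p ∈ s) (ht : t ∈ s) (hpq : p ≤ q) (hqt : q ≤ t)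
    (h : q + r = p + t) :
    f p + f t ≤ f q + f r := by
  rcases (hpq.trans hqt).eq_or_lt with rfl | hpt
  · obtain rfl : q = p := le_antisymm hqt hpq
    obtain rfl : r = q := by linarith
    rfl
  · have hne : t - p ≠ 0 := (sub_pos.2 hpt).ne'
    have hθ : 0 ≤ (t - q) / (t - p) := div_nonneg (by linarith) (by linarith)
    have hθ' : 0 ≤ (q - p) / (t - p) := div_nonneg (by linarith) (by linarith)
    have hsum : (t - q) / (t - p) + (q - p) / (t - p) = 1 := by field_simp; ring
    have hq := hf.2 hp ht hθ hθ' hsum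
    have hr := hf.2 hp ht hθ' hθ (by rwa [add_comm])
    have eq : ((t - q) / (t - p)) • p + ((q - p) / (t - p)) • t = q := by
      simp only [smul_eq_mul]; field_simp; ring
    have er : ((q - p) / (t - p)) • p + ((t - q) / (t - p)) • t = r := by
      simp only [smul_eq_mul]; field_simp; linear_combination (p - t) * h
    rw [eq] at hq
    rw [er] at hr
    simp only [smul_eq_mul] at hq hr
    linear_combination hq + hr - (f p + f t) * hsum

noncomputable def laplaceMass (N b t : ℝ) : ℝ :=
  1 - (exp (-t / b) + exp (-(N - t) / b)) / 2

theorem laplaceMass_symm (N b t : ℝ) : laplaceMass N b (N - t) = laplaceMass N b t := by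
  simp only [laplaceMass, sub_sub_cancel]
  ring

theorem laplaceMass_zero (N b : ℝ) : laplaceMass N b 0 = (1 - exp (-N / b)) / 2 := by
  simp only [laplaceMass, neg_zero, zero_div, exp_zero, sub_zero]
  ring

theorem laplaceMass_sub_one_div_laplaceMass_zero (N b : ℝ) :
    laplaceMass N b (N - 1) / laplaceMass N b 0
      = (2 - exp (-(N - 1) / b) - exp (-1 / b)) / (1 - exp (-N / b)) := by
  have h : laplaceMass N b (N - 1) = (2 - exp (-(N - 1) / b) - exp (-1 / b)) / 2 := by
    rw [laplaceMass, sub_sub_cancel]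
    ring
  rw [h, laplaceMass_zero, div_div_div_cancel_right₀ two_ne_zero]

theorem concaveOn_laplaceMass (N b : ℝ) : ConcaveOn ℝ univ (laplaceMass N b) := by
  have hconv := (convexOn_exp_mul_add (-b⁻¹) 0).add (convexOn_exp_mul_add b⁻¹ (-N / b))
  refine ((concaveOn_const 1 convex_univ).sub
    (hconv.smul (by norm_num : (0 : ℝ) ≤ 1 / 2))).congr fun t _ => ?_
  simp only [laplaceMass, Pi.add_apply, Pi.sub_apply, smul_eq_mul]
  ring_nf

section laplaceMass

variable {N b : ℝ}

theorem laplaceMass_zero_pos (hb : 0 < b) (hN : 0 < N) : 0 < laplaceMass N b 0 := by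
  have : exp (-N / b) < 1 := exp_lt_one_iff.2 (div_neg_of_neg_of_pos (neg_neg_of_pos hN) hb)
  rw [laplaceMass_zero]
  linarith

theorem laplaceMass_zero_le {t : ℝ} (ht : t ∈ Icc 0 N) :
    laplaceMass N b 0 ≤ laplaceMass N b t := by
  have h := (concaveOn_laplaceMass N b).min_le_of_mem_Icc (mem_univ 0) (mem_univ N) ht
  have hsymm : laplaceMass N b (N - N) = laplaceMass N b N := laplaceMass_symm N b N
  rw [sub_self] at hsymm
  rwa [← hsymm, min_self] at h

theorem laplaceMass_pos (hb : 0 < b) (hN : 0 < N) {t : ℝ} (ht : t ∈ Icc 0 N) :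
    0 < laplaceMass N b t :=
  (laplaceMass_zero_pos hb hN).trans_le (laplaceMass_zero_le ht)

theorem laplaceMass_mul_laplaceMass_zero_le (hb : 0 < b) (hN : 0 < N) {t t' : ℝ}
    (ht : t ∈ Icc 0 N) (ht' : t' ∈ Icc 0 N) :
    laplaceMass N b t' * laplaceMass N b 0 ≤ laplaceMass N b t * laplaceMass N b |t - t'| := by
  have hpos : ∀ s ∈ Icc 0 N, 0 < laplaceMass N b s := fun s hs => laplaceMass_pos hb hN hs
  have h0 : (0 : ℝ) ∈ Icc 0 N := left_mem_Icc.2 hN.le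
  have hd : |t - t'| ∈ Icc 0 N :=
    ⟨abs_nonneg _, abs_sub_le_iff.2 ⟨by linarith [ht.2, ht'.1], by linarith [ht.1, ht'.2]⟩⟩
  have hlog := ((concaveOn_laplaceMass N b).subset (subset_univ _) (convex_Icc 0 N)).log hpos
  have key : log (laplaceMass N b t') + log (laplaceMass N b 0)
      ≤ log (laplaceMass N b t) + log (laplaceMass N b |t - t'|) := by
    rcases le_total t t' with h | h
    · rw [abs_of_nonpos (sub_nonpos.2 h), add_comm (log _)]
      exact hlog.add_le_add_of_add_eq h0 ht' ht.1 h (by ring)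
    -- for `t' ≤ t`, compare `t' ≤ t, N - (t - t') ≤ N` and reflect through `s ↦ N - s`
    · rw [abs_of_nonneg (sub_nonneg.2 h), ← laplaceMass_symm N b 0,
        ← laplaceMass_symm N b (t - t'), sub_zero]
      exact hlog.add_le_add_of_add_eq ht' (right_mem_Icc.2 hN.le) h ht.2 (by ring)
  rw [← log_mul (hpos _ ht').ne' (hpos _ h0).ne',
    ← log_mul (hpos _ ht).ne' (hpos _ hd).ne'] at key
  exact (log_le_log_iff (mul_pos (hpos _ ht') (hpos _ h0)) (mul_pos (hpos _ ht) (hpos _ hd))).1 key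

theorem monotoneOn_laplaceMass_mul_exp (hb : 0 < b) :
    MonotoneOn (fun t => laplaceMass N b t * exp (t / b)) (Iic N) := by
  have hform : ∀ t, laplaceMass N b t * exp (t / b)
      = exp (t / b) - (1 + exp (t / b) ^ 2 / exp (N / b)) / 2 := fun t => by
    rw [laplaceMass, show -t / b = -(t / b) by ring, show -(N - t) / b = t / b - N / b by ring,
      exp_neg, exp_sub]
    field_simp
  intro s _ t ht hst
  simp only [hform]
  have hst' : exp (s / b) ≤ exp (t / b) := by gcongr
  have htN : exp (t / b) ≤ exp (N / b) := by gcongr; exact ht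
  rw [← sub_nonneg]
  have expand : exp (t / b) - (1 + exp (t / b) ^ 2 / exp (N / b)) / 2
      - (exp (s / b) - (1 + exp (s / b) ^ 2 / exp (N / b)) / 2)
      = (exp (t / b) - exp (s / b)) * (2 * exp (N / b) - exp (s / b) - exp (t / b))
        / (2 * exp (N / b)) := by
    field_simp
    ring
  rw [expand]
  exact div_nonneg (mul_nonneg (by linarith) (by linarith)) (by positivity)

theorem exp_mul_laplaceMass_div_le (hb : 0 < b) {t t' : ℝ} (ht : t ∈ Icc 0 N)
    (ht' : t' ∈ Icc 0 N) (hd : |t - t'| ≤ N - 1) :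
    exp (|t - t'| / b) * laplaceMass N b t' / laplaceMass N b t
      ≤ laplaceMass N b (N - 1) / laplaceMass N b 0 * exp ((N - 1) / b) := by
  have hN : 0 < N := by linarith [abs_nonneg (t - t')]
  have hmono : laplaceMass N b |t - t'| * exp (|t - t'| / b)
      ≤ laplaceMass N b (N - 1) * exp ((N - 1) / b) :=
    monotoneOn_laplaceMass_mul_exp hb (mem_Iic.2 (by linarith)) (mem_Iic.2 (by linarith)) hd
  rw [div_le_iff₀ (laplaceMass_pos hb hN ht), div_mul_eq_mul_div, div_mul_eq_mul_div,
    le_div_iff₀ (laplaceMass_zero_pos hb hN)]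
  calc exp (|t - t'| / b) * laplaceMass N b t' * laplaceMass N b 0
      = exp (|t - t'| / b) * (laplaceMass N b t' * laplaceMass N b 0) := by ring
    _ ≤ exp (|t - t'| / b) * (laplaceMass N b t * laplaceMass N b |t - t'|) :=
      mul_le_mul_of_nonneg_left (laplaceMass_mul_laplaceMass_zero_le hb hN ht ht') (exp_pos _).le
    _ = laplaceMass N b |t - t'| * exp (|t - t'| / b) * laplaceMass N b t := by ring
    _ ≤ laplaceMass N b (N - 1) * exp ((N - 1) / b) * laplaceMass N b t := by
      gcongr
      exact (laplaceMass_pos hb hN ht).le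

end laplaceMass

theorem Cnorm_eq_laplaceMass {n : ℕ} {t b : ℝ} (hb : b ≠ 0) (ht : t ∈ Icc 0 (n : ℝ)) :
    Cnorm n t b = laplaceMass n b t := by
  have hint : ∀ a c : ℝ, IntervalIntegrable (fun x => exp (-|x - t| / b)) volume a c :=
    fun a c => (by fun_prop : Continuous fun x => exp (-|x - t| / b)).intervalIntegrable a c
  have hleft :
      ∫ x in (0 : ℝ)..t, exp (-|x - t| / b) = ∫ x in (0 : ℝ)..t, exp (x / b - t / b) :=
    intervalIntegral.integral_congr fun x hx => by
      rw [uIcc_of_le ht.1] at hx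
      rw [abs_of_nonpos (by linarith [hx.2])]
      ring_nf
  have hright :
      ∫ x in t..(n : ℝ), exp (-|x - t| / b) = ∫ x in t..(n : ℝ), exp (t / b - x / b) :=
    intervalIntegral.integral_congr fun x hx => by
      rw [uIcc_of_le ht.2] at hx
      rw [abs_of_nonneg (by linarith [hx.1])]
      ring_nf
  rw [Cnorm, intervalIntegral.integral_const_mul,
    ← intervalIntegral.integral_add_adjacent_intervals (hint 0 t) (hint t n), hleft, hright,
    intervalIntegral.integral_comp_div_sub exp hb, intervalIntegral.integral_comp_sub_div exp hb,
    integral_exp, integral_exp, sub_self, exp_zero, laplaceMass]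
  field_simp
  ring_nf

theorem isProbabilityMeasure_boundedLaplace {n : ℕ} {lam b : ℝ} (hb : 0 < b)
    (hC : 0 < Cnorm n lam b) : IsProbabilityMeasure (boundedLaplace n lam b) := by
  set g : ℝ → ℝ := fun x => 1 / (2 * b * Cnorm n lam b) * exp (-|x - lam| / b)
  have hdens : (fun x => if x ∈ Icc (0 : ℝ) n then ENNReal.ofReal (g x) else 0)
      = (Icc (0 : ℝ) n).indicator fun x => ENNReal.ofReal (g x) :=
    funext fun x => by rw [indicator_apply]
  have hCI : Cnorm n lam b = 1 / (2 * b) * ∫ x in (0 : ℝ)..n, exp (-|x - lam| / b) :=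
    intervalIntegral.integral_const_mul _ _
  constructor
  rw [boundedLaplace, withDensity_apply _ MeasurableSet.univ, Measure.restrict_univ, hdens,
    lintegral_indicator measurableSet_Icc,
    ← ofReal_integral_eq_lintegral_ofReal
      (by fun_prop : Continuous g).integrableOn_Icc (ae_of_all _ fun x => by positivity),
    integral_Icc_eq_integral_Ioc, ← intervalIntegral.integral_of_le n.cast_nonneg,
    intervalIntegral.integral_const_mul,
    show 1 / (2 * b * Cnorm n lam b) = (Cnorm n lam b)⁻¹ * (1 / (2 * b)) by ring, mul_assoc,
    ← hCI, inv_mul_cancel₀ hC.ne', ENNReal.ofReal_one]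

theorem boundedLaplace_le_smul {n : ℕ} {lam lam' b : ℝ} (hb : 0 < b) (hC : 0 < Cnorm n lam b)
    (hC' : 0 < Cnorm n lam' b) :
    boundedLaplace n lam b ≤ ENNReal.ofReal (exp (|lam - lam'| / b) * Cnorm n lam' b
      / Cnorm n lam b) • boundedLaplace n lam' b := by
  rw [boundedLaplace, boundedLaplace, ← withDensity_smul' _ _ ENNReal.ofReal_ne_top]
  refine withDensity_mono (ae_of_all _ fun x => ?_)
  simp only [Pi.smul_apply, smul_eq_mul]
  split_ifs
  · rw [← ENNReal.ofReal_mul (by positivity)]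
    apply ENNReal.ofReal_le_ofReal
    have htri : -|x - lam| / b ≤ |lam - lam'| / b + -|x - lam'| / b := by
      rw [← add_div]
      gcongr
      linarith [abs_sub_le x lam lam']
    calc 1 / (2 * b * Cnorm n lam b) * exp (-|x - lam| / b)
        ≤ 1 / (2 * b * Cnorm n lam b) * (exp (|lam - lam'| / b) * exp (-|x - lam'| / b)) := by
          rw [← exp_add]
          gcongr
      _ = _ := by field_simp
  · simp

theorem MeasureTheory.Measure.apply_le_ofReal_mul_add_of_le_smul {α : Type*}
    [MeasurableSpace α] {μ ν : Measure α} [IsProbabilityMeasure μ] {K L δ : ℝ}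
    (h : μ ≤ ENNReal.ofReal K • ν)
    (hδ0 : 0 ≤ δ) (hδ1 : δ ≤ 1) (hKL : K * (1 - δ) ≤ L) (S : Set α) :
    μ S ≤ ENNReal.ofReal L * ν S + ENNReal.ofReal δ := by
  have hsplit : ENNReal.ofReal (1 - δ) + ENNReal.ofReal δ = 1 := by
    rw [← ENNReal.ofReal_add (by linarith) hδ0, sub_add_cancel, ENNReal.ofReal_one]
  calc μ S = ENNReal.ofReal (1 - δ) * μ S + ENNReal.ofReal δ * μ S := by
        rw [← add_mul, hsplit, one_mul]
    _ ≤ ENNReal.ofReal (1 - δ) * (ENNReal.ofReal K * ν S) + ENNReal.ofReal δ * 1 := by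
        gcongr
        · simpa using Measure.le_iff'.1 h S
        · exact prob_le_one
    _ = ENNReal.ofReal (K * (1 - δ)) * ν S + ENNReal.ofReal δ := by
        rw [← mul_assoc, ← ENNReal.ofReal_mul (by linarith), mul_comm (1 - δ), mul_one]
    _ ≤ ENNReal.ofReal L * ν S + ENNReal.ofReal δ := by gcongr

theorem mul_exp_div_mul_le_exp {D δ ε m b : ℝ} (hb : 0 < b) (hD : 0 < D) (hδ : δ < 1)
    (hpos : 0 < ε - log D - log (1 - δ)) (hm : m / (ε - log D - log (1 - δ)) ≤ b) :
    D * exp (m / b) * (1 - δ) ≤ exp ε := by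
  have h1δ : 0 < 1 - δ := sub_pos.2 hδ
  have hmb : m / b ≤ ε - log D - log (1 - δ) := by
    rw [div_le_iff₀ hpos] at hm
    rw [div_le_iff₀ hb]
    linarith
  calc D * exp (m / b) * (1 - δ) ≤ D * exp (ε - log D - log (1 - δ)) * (1 - δ) := by gcongr
    _ = exp ε := by
      rw [exp_sub, exp_sub, exp_log hD, exp_log h1δ]
      field_simp

theorem bounded_laplace_node_dp_general (ε δ : ℝ) (hδ : δ ∈ Set.Ioo (0 : ℝ) 1)
    (n : ℕ) (b : ℝ) (hb : 0 < b)
    (hpos : 0 < ε - Real.log ((2 - Real.exp (-((n : ℝ) - 1) / b)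
        - Real.exp (-1 / b)) / (1 - Real.exp (-(n : ℝ) / b)))
      - Real.log (1 - δ))
    (hbge : ((n : ℝ) - 1) / (ε - Real.log ((2 - Real.exp (-((n : ℝ) - 1) / b)
        - Real.exp (-1 / b)) / (1 - Real.exp (-(n : ℝ) / b)))
      - Real.log (1 - δ)) ≤ b)
    (lam lam' : ℝ) (hlam : lam ∈ Set.Icc (0 : ℝ) (n : ℝ))
    (hlam' : lam' ∈ Set.Icc (0 : ℝ) (n : ℝ)) (hdiff : |lam - lam'| ≤ (n : ℝ) - 1)
    (S : Set ℝ) :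
    boundedLaplace n lam b S
      ≤ ENNReal.ofReal (Real.exp ε) * boundedLaplace n lam' b S + ENNReal.ofReal δ := by
  obtain ⟨hδ0, hδ1⟩ := hδ
  have hn1 : (n : ℝ) - 1 ∈ Icc 0 (n : ℝ) :=
    ⟨by linarith [abs_nonneg (lam - lam')], by linarith⟩
  have hn : (0 : ℝ) < n := by linarith [hn1.1]
  have hC := Cnorm_eq_laplaceMass hb.ne' hlam
  have hC' := Cnorm_eq_laplaceMass hb.ne' hlam'
  have hCpos : 0 < Cnorm n lam b := hC ▸ laplaceMass_pos hb hn hlam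
  have := isProbabilityMeasure_boundedLaplace hb hCpos
  rw [← laplaceMass_sub_one_div_laplaceMass_zero] at hpos hbge
  refine Measure.apply_le_ofReal_mul_add_of_le_smul
    (boundedLaplace_le_smul hb hCpos (hC' ▸ laplaceMass_pos hb hn hlam')) hδ0.le hδ1.le ?_ S
  calc exp (|lam - lam'| / b) * Cnorm n lam' b / Cnorm n lam b * (1 - δ)
      ≤ laplaceMass n b (n - 1) / laplaceMass n b 0 * exp ((n - 1) / b) * (1 - δ) := by
        rw [hC, hC']
        exact mul_le_mul_of_nonneg_right (exp_mul_laplaceMass_div_le hb hlam hlam' hdiff)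
          (by linarith)
    _ ≤ exp ε := mul_exp_div_mul_le_exp hb
        (div_pos (laplaceMass_pos hb hn hn1) (laplaceMass_zero_pos hb hn)) hδ1 hpos hbge

/-- Node differential privacy of the bounded Laplace mechanism: if
`b ≥ (n−1) / (ε − log ΔC(b) − log(1 − δ))`, where
`ΔC(b) = (2 − e^{−(n−1)/b} − e^{−1/b})/(1 − e^{−n/b})`, then for any `λ, λ' ∈ [0, n]`
with `|λ − λ'| ≤ n − 1` and any Borel `S ⊆ ℝ`, `μ_{λ,b}(S) ≤ e^ε μ_{λ',b}(S) + δ`. -/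
theorem bounded_laplace_node_dp (ε δ : ℝ) (hε : 0 < ε) (hδ : δ ∈ Set.Ioo (0 : ℝ) 1)
    (n : ℕ) (hn : 3 ≤ n) (b : ℝ) (hb : 0 < b)
    (hpos : 0 < ε - Real.log ((2 - Real.exp (-((n : ℝ) - 1) / b)
        - Real.exp (-1 / b)) / (1 - Real.exp (-(n : ℝ) / b)))
      - Real.log (1 - δ))
    (hbge : ((n : ℝ) - 1) / (ε - Real.log ((2 - Real.exp (-((n : ℝ) - 1) / b)
        - Real.exp (-1 / b)) / (1 - Real.exp (-(n : ℝ) / b)))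
      - Real.log (1 - δ)) ≤ b)
    (lam lam' : ℝ) (hlam : lam ∈ Set.Icc (0 : ℝ) (n : ℝ))
    (hlam' : lam' ∈ Set.Icc (0 : ℝ) (n : ℝ)) (hdiff : |lam - lam'| ≤ (n : ℝ) - 1)
    (S : Set ℝ) (hS : MeasurableSet S) :
    boundedLaplace n lam b S
      ≤ ENNReal.ofReal (Real.exp ε) * boundedLaplace n lam' b S + ENNReal.ofReal δ :=
  bounded_laplace_node_dp_general ε δ hδ n b hb hpos hbge lam lam' hlam hlam' hdiff S
end
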